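/- Let Φ : 𝒞(ℝ^c) → 𝒞(ℝ^d) be an arbitrary lattice homomorphism. Then for every C ∈ 𝒞(ℝ^c), Φ(C) ⊆ conv(⋃_{x ∈ ℝ^c} Φ({x})); in particular, if F ⊆ ℝ^d is a convex set containing Φ({x}) for every x ∈ ℝ^c, then Φ(C) ⊆ F for every C ∈ 𝒞(ℝ^c). -/

import Mathlib

open Set

noncomputable section

/-- Euclidean space `ℝ^n`. -/
abbrev E (n : ℕ) := EuclideanSpace ℝ (Fin n)

/-- A convex body of `ℝ^n`: a compact convex subset (possibly empty). -/
def IsBody {n : ℕ} (C : Set (E n)) : Prop := Convex ℝ C ∧ IsCompact C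

/-- `Φ` represents a lattice homomorphism from `𝒞(ℝ^c)` to `𝒞(ℝ^d)`: it maps convex bodies
to convex bodies, and on convex bodies it preserves intersections (the lattice meet) and
convex hulls of unions (the lattice join). -/
def IsLatHom {c d : ℕ} (Φ : Set (E c) → Set (E d)) : Prop :=
  (∀ C, IsBody C → IsBody (Φ C)) ∧
  ∀ C D : Set (E c), IsBody C → IsBody D →
    Φ (C ∩ D) = Φ C ∩ Φ D ∧ Φ (convexHull ℝ (C ∪ D)) = convexHull ℝ (Φ C ∪ Φ D)

/-- `Φ` is non-trivial: it is not constant on convex bodies. -/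
def NonTrivial {c d : ℕ} (Φ : Set (E c) → Set (E d)) : Prop :=
  ∃ C D : Set (E c), IsBody C ∧ IsBody D ∧ Φ C ≠ Φ D

/-- The closed ray emanating from `o` in direction `u`. -/
def Ray {n : ℕ} (o u : E n) : Set (E n) := {p | ∃ t : ℝ, 0 ≤ t ∧ p = o + t • u}

/-- An affine hyperplane of `ℝ^n`: a nonempty affine subspace of dimension `n - 1`. -/
def IsHyperplane {n : ℕ} (H : AffineSubspace ℝ (E n)) : Prop :=
  (H : Set (E n)).Nonempty ∧ Module.finrank ℝ H.direction + 1 = n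

open scoped Classical in
/-- The dimension of a convex set: the dimension of its affine hull, with `sdim ∅ = -1`. -/
def sdim {n : ℕ} (s : Set (E n)) : ℤ :=
  if s = ∅ then -1 else Module.finrank ℝ (affineSpan ℝ s).direction

/-!
A convex body `C` lies in a polytope `conv s` with `s` finite. Preservation of meets makes `Φ`
monotone, and preservation of joins, applied one vertex at a time, gives
`Φ(conv s) = conv (⋃_{x ∈ s} Φ {x})`; hence `Φ C` lies in every convex set containing all `Φ {x}`.
-/

lemma isBody_singleton {n : ℕ} (x : E n) : IsBody ({x} : Set (E n)) :=
  ⟨convex_singleton x, isCompact_singleton⟩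

lemma isBody_convexHull_finset {n : ℕ} (s : Finset (E n)) :
    IsBody (convexHull ℝ (s : Set (E n))) :=
  ⟨convex_convexHull ℝ _, s.finite_toSet.isCompact_convexHull ℝ⟩

lemma IsBody.exists_finset_nonempty_subset_convexHull {n : ℕ} {C : Set (E n)} (hC : IsBody C) :
    ∃ s : Finset (E n), s.Nonempty ∧ C ⊆ convexHull ℝ (s : Set (E n)) := by
  classical
  obtain ⟨s, hCs, -⟩ :=
    hC.1.exists_subset_interior_convexHull_finset_of_isCompact hC.2 (Filter.univ_mem (f := _))
  refine ⟨insert 0 s, Finset.insert_nonempty 0 s, hCs.trans ?_⟩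
  exact interior_subset.trans (convexHull_mono (by simp))

namespace IsLatHom

variable {c d : ℕ} {Φ : Set (E c) → Set (E d)}

lemma mono (hΦ : IsLatHom Φ) {C D : Set (E c)} (hC : IsBody C) (hD : IsBody D) (h : C ⊆ D) :
    Φ C ⊆ Φ D := by
  have hmeet := (hΦ.2 C D hC hD).1
  rw [inter_eq_left.mpr h] at hmeet
  exact hmeet ▸ inter_subset_right

lemma image_convexHull_finset (hΦ : IsLatHom Φ) {s : Finset (E c)} (hs : s.Nonempty) :
    Φ (convexHull ℝ (s : Set (E c))) = convexHull ℝ (⋃ x ∈ (s : Set (E c)), Φ {x}) := by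
  induction hs using Finset.Nonempty.cons_induction with
  | singleton a =>
    simp only [Finset.coe_singleton, convexHull_singleton, mem_singleton_iff,
      iUnion_iUnion_eq_left]
    exact (hΦ.1 _ (isBody_singleton a)).1.convexHull_eq.symm
  | cons a t ha ht ih =>
    rw [Finset.coe_cons, insert_eq, ← convexHull_convexHull_union_right,
      (hΦ.2 {a} _ (isBody_singleton a) (isBody_convexHull_finset t)).2, ih,
      convexHull_convexHull_union_right, biUnion_union, biUnion_singleton]

lemma image_subset_of_convex (hΦ : IsLatHom Φ) {F : Set (E d)} (hF : Convex ℝ F)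
    (hFΦ : ∀ x, Φ {x} ⊆ F) {C : Set (E c)} (hC : IsBody C) : Φ C ⊆ F := by
  obtain ⟨s, hs, hCs⟩ := hC.exists_finset_nonempty_subset_convexHull
  calc Φ C ⊆ Φ (convexHull ℝ (s : Set (E c))) := hΦ.mono hC (isBody_convexHull_finset s) hCs
    _ = convexHull ℝ (⋃ x ∈ (s : Set (E c)), Φ {x}) := hΦ.image_convexHull_finset hs
    _ ⊆ F := convexHull_min (iUnion₂_subset fun x _ => hFΦ x) hF

end IsLatHom

/-- The range of a lattice homomorphism is determined by the images of one-point sets: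
`Φ(C) ⊆ conv(⋃_x Φ({x}))`; in particular any convex `F` containing every `Φ({x})`
contains every `Φ(C)`. -/
theorem stmt_19 (c d : ℕ) (Φ : Set (E c) → Set (E d)) (hΦ : IsLatHom Φ) :
    (∀ C : Set (E c), IsBody C → Φ C ⊆ convexHull ℝ (⋃ x : E c, Φ {x})) ∧
    (∀ F : Set (E d), Convex ℝ F → (∀ x : E c, Φ {x} ⊆ F) →
      ∀ C : Set (E c), IsBody C → Φ C ⊆ F) :=
  ⟨fun _ hC => hΦ.image_subset_of_convex (convex_convexHull ℝ _)
      (fun x => (subset_iUnion (fun y => Φ {y}) x).trans (subset_convexHull ℝ _)) hC,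
    fun _ hF hFΦ _ hC => hΦ.image_subset_of_convex hF hFΦ hC⟩
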